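/- arXiv:2401.13384 — 2 statements merged into one kernel-verified Lean document; each statement's English description precedes it below -/
import Mathlib

section
/- Let H > 1, let û ∈ [1,H], and let ρ : [1,H] → [0,1] be non-increasing. If (x,p) is a feasible DSIC single-bidder auction on [1,H] satisfying p(t) ≥ ρ(û/t)·t for all t ∈ [1,û] and p(t) ≥ ρ(t/û)·t for all t ∈ [û,H], then ρ(H/û) + ∫_1^û ρ(z)/z dz + ∫_1^{H/û} ρ(z)/z dz ≤ 1. -/
open MeasureTheory intervalIntegral Set

/-!
Write `F t = ∫_1^t x`. Myerson's identity at `s = 1` and individual rationality give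
`p t ≤ t x(t) - F t`, and `(t x(t) - F t) / t²` is the derivative of `F t / t` away from the
countably many jumps of the monotone `x`. Dividing the robustness guarantees by `t²` and
integrating over `[1, û]` and `[û, H]` therefore bounds `∫ ρ(û/t)/t` by `F û / û` and
`∫ ρ(t/û)/t` by `F H / H - F û / û`; the substitutions `z = û/t` and `z = t/û` preserve `dz/z`
and turn these into the two integrals of the claim. At `t = H`, feasibility `x H ≤ 1` gives
`ρ(H/û) ≤ 1 - F H / H`, and the three bounds add up to `1`.
-/

theorem IntervalIntegrable.div_id {f : ℝ → ℝ} {a b : ℝ} (hf : IntervalIntegrable f volume a b)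
    (h0 : (0 : ℝ) ∉ uIcc a b) : IntervalIntegrable (fun t => f t / t) volume a b := by
  simpa only [div_eq_mul_inv] using
    hf.mul_continuousOn (continuousOn_inv₀.mono fun t ht h => h0 (h ▸ ht))

theorem AntitoneOn.monotoneOn_comp_div_left {ρ : ℝ → ℝ} {s : Set ℝ} {a b c : ℝ}
    (hρ : AntitoneOn ρ s) (ha : 0 < a) (hc : 0 ≤ c)
    (hmaps : MapsTo (fun t => c / t) (Icc a b) s) :
    MonotoneOn (fun t => ρ (c / t)) (Icc a b) := fun _ ht _ hu htu =>
  hρ (hmaps hu) (hmaps ht) (div_le_div_of_nonneg_left hc (ha.trans_le ht.1) htu)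

theorem AntitoneOn.antitoneOn_comp_div_const {ρ : ℝ → ℝ} {s : Set ℝ} {a b c : ℝ}
    (hρ : AntitoneOn ρ s) (hc : 0 ≤ c) (hmaps : MapsTo (fun t => t / c) (Icc a b) s) :
    AntitoneOn (fun t => ρ (t / c)) (Icc a b) := fun _ ht _ hu htu =>
  hρ (hmaps ht) (hmaps hu) (div_le_div_of_nonneg_right htu hc)

theorem integral_comp_div_div (g : ℝ → ℝ) (a b : ℝ) {c : ℝ} (hc : c ≠ 0) :
    ∫ t in a..b, g (t / c) / t = ∫ z in a / c..b / c, g z / z := by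
  calc ∫ t in a..b, g (t / c) / t = c⁻¹ * ∫ t in a..b, g (t / c) / (t / c) := by
        rw [← intervalIntegral.integral_const_mul]
        congr 1 with t
        rcases eq_or_ne t 0 with rfl | ht
        · simp
        · field_simp
    _ = ∫ z in a / c..b / c, g z / z := by
        rw [integral_comp_div (fun z => g z / z) hc, smul_eq_mul, inv_mul_cancel_left₀ hc]

theorem integral_comp_div_left_div (g : ℝ → ℝ) {a b c : ℝ} (ha : 0 < a) (hb : 0 < b)
    (hc : 0 < c) : ∫ t in a..b, g (c / t) / t = ∫ z in c / b..c / a, g z / z := by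
  have hpos : ∀ t ∈ uIcc a b, 0 < t := fun t ht => lt_of_lt_of_le (lt_min ha hb) ht.1
  have h := integral_comp_mul_deriv_of_deriv_nonpos (a := a) (b := b) (f := fun t => c / t)
    (f' := fun t => -(c / t ^ 2)) (g := fun z => g z / z)
    (continuousOn_const.div continuousOn_id fun t ht => (hpos t ht).ne')
    (fun t ht => by
      simpa [div_eq_mul_inv] using
        (hasDerivAt_inv (hpos t (Ioo_subset_Icc_self ht)).ne').const_mul c)
    (fun t ht => by have := hpos t (Ioo_subset_Icc_self ht); simp only [neg_nonpos]; positivity)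
  rw [integral_symm (c / a), ← h, ← intervalIntegral.integral_neg]
  refine integral_congr fun t ht => ?_
  have := (hpos t ht).ne'
  simp only [Function.comp_apply]
  field_simp

theorem Monotone.hasDerivAt_primitive_div {g : ℝ → ℝ} (hg : Monotone g) (c : ℝ) {t : ℝ}
    (ht : t ≠ 0) (hgt : ContinuousAt g t) :
    HasDerivAt (fun s => (∫ z in c..s, g z) / s)
      (g t / t - (∫ z in c..t, g z) / t ^ 2) t := by
  have hF := integral_hasDerivAt_right hg.intervalIntegrable
    hg.measurable.stronglyMeasurable.stronglyMeasurableAtFilter hgt (a := c)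
  refine (hF.div (hasDerivAt_id' t) ht).congr_deriv ?_
  field_simp

theorem Monotone.intervalIntegrable_div_sub_primitive_div_sq {g : ℝ → ℝ} (hg : Monotone g)
    (c : ℝ) {a b : ℝ} (h0 : (0 : ℝ) ∉ uIcc a b) :
    IntervalIntegrable (fun t => g t / t - (∫ z in c..t, g z) / t ^ 2) volume a b := by
  refine (hg.intervalIntegrable.div_id h0).sub (ContinuousOn.intervalIntegrable ?_)
  exact (continuous_primitive (fun _ _ => hg.intervalIntegrable) c).continuousOn.div
    (continuousOn_pow 2) fun t ht => pow_ne_zero 2 fun h => h0 (h ▸ ht)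

theorem Monotone.integral_div_sub_primitive_div_sq {g : ℝ → ℝ} (hg : Monotone g) (c : ℝ)
    {a b : ℝ} (ha : 0 < a) (hab : a ≤ b) :
    ∫ t in a..b, (g t / t - (∫ z in c..t, g z) / t ^ 2) =
      (∫ z in c..b, g z) / b - (∫ z in c..a, g z) / a := by
  have hpos : ∀ t ∈ Icc a b, 0 < t := fun t ht => ha.trans_le ht.1
  refine integral_eq_of_hasDerivAt_off_countable_of_le (fun s => (∫ z in c..s, g z) / s) _ hab
    hg.countable_not_continuousAt ?_ (fun t ht => ?_)
    (hg.intervalIntegrable_div_sub_primitive_div_sq c ?_)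
  · exact (continuous_primitive (fun _ _ => hg.intervalIntegrable) c).continuousOn.div
      continuousOn_id fun t ht => (hpos t ht).ne'
  · exact hg.hasDerivAt_primitive_div c (hpos t (Ioo_subset_Icc_self ht.1)).ne' (not_not.1 ht.2)
  · exact notMem_uIcc_of_lt ha (ha.trans_le hab)

theorem Monotone.integral_div_le_primitive_div_sub {g φ : ℝ → ℝ} (hg : Monotone g) (c : ℝ)
    {a b : ℝ} (ha : 0 < a) (hab : a ≤ b) (hφ : IntervalIntegrable (fun t => φ t / t) volume a b)
    (hφg : ∀ t ∈ Icc a b, φ t * t ≤ t * g t - ∫ z in c..t, g z) :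
    ∫ t in a..b, φ t / t ≤ (∫ z in c..b, g z) / b - (∫ z in c..a, g z) / a := by
  rw [← hg.integral_div_sub_primitive_div_sq c ha hab]
  refine integral_mono_on hab hφ (hg.intervalIntegrable_div_sub_primitive_div_sq c ?_)
    fun t ht => ?_
  · exact notMem_uIcc_of_lt ha (ha.trans_le hab)
  · have ht0 := ha.trans_le ht.1
    calc φ t / t = φ t * t / t ^ 2 := by field_simp
      _ ≤ (t * g t - ∫ z in c..t, g z) / t ^ 2 := by gcongr; exact hφg t ht
      _ = g t / t - (∫ z in c..t, g z) / t ^ 2 := by field_simp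

theorem MonotoneOn.integral_div_le_primitive_div_sub {g φ : ℝ → ℝ} {c a b : ℝ}
    (hg : MonotoneOn g (Icc c b)) (hca : c ≤ a) (ha : 0 < a) (hab : a ≤ b)
    (hφ : IntervalIntegrable (fun t => φ t / t) volume a b)
    (hφg : ∀ t ∈ Icc a b, φ t * t ≤ t * g t - ∫ z in c..t, g z) :
    ∫ t in a..b, φ t / t ≤ (∫ z in c..b, g z) / b - (∫ z in c..a, g z) / a := by
  have hcb : c ≤ b := hca.trans hab
  obtain ⟨y, hy, hgy⟩ := hg.exists_monotone_extension
    ⟨g c, forall_mem_image.2 fun t ht => hg ⟨le_rfl, hcb⟩ ht ht.1⟩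
    ⟨g b, forall_mem_image.2 fun t ht => hg ht ⟨hcb, le_rfl⟩ ht.2⟩
  have hprim : ∀ t ∈ Icc c b, ∫ z in c..t, g z = ∫ z in c..t, y z := fun t ht =>
    integral_congr fun z hz => hgy (uIcc_subset_Icc ⟨le_rfl, hcb⟩ ht hz)
  rw [hprim a ⟨hca, hab⟩, hprim b ⟨hcb, le_rfl⟩]
  refine hy.integral_div_le_primitive_div_sub c ha hab hφ fun t ht => ?_
  have ht' : t ∈ Icc c b := ⟨hca.trans ht.1, ht.2⟩
  rw [← hprim t ht', ← hgy ht']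
  exact hφg t ht

theorem robustness_of_prediction_error_necessary_general (H : ℝ) (hH : 1 < H)
    (uhat : ℝ) (huhat : uhat ∈ Set.Icc 1 H)
    (ρ : ℝ → ℝ)
    (hρanti : AntitoneOn ρ (Set.Icc 1 H))
    (x p : ℝ → ℝ)
    -- feasibility
    (hfeas : ∀ t ∈ Set.Icc 1 H, 0 ≤ x t ∧ x t ≤ 1)
    -- DSIC: nonnegative payments, monotone allocation, individual rationality,
    -- and Myerson's payment identity
    (hmono : MonotoneOn x (Set.Icc 1 H))
    (hir : p 1 ≤ x 1)
    (hmyerson : ∀ s t : ℝ, 1 ≤ s → s ≤ t → t ≤ H →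
      p t - p s = t * x t - s * x s - ∫ z in s..t, x z)
    -- error-dependent robustness guarantee
    (hrob₁ : ∀ t ∈ Set.Icc 1 uhat, ρ (uhat / t) * t ≤ p t)
    (hrob₂ : ∀ t ∈ Set.Icc uhat H, ρ (t / uhat) * t ≤ p t) :
    ρ (H / uhat) + (∫ z in (1:ℝ)..uhat, ρ z / z)
      + (∫ z in (1:ℝ)..(H / uhat), ρ z / z) ≤ 1 := by
  obtain ⟨hu1, huH⟩ := huhat
  have hu0 : 0 < uhat := one_pos.trans_le hu1
  have hpay : ∀ t ∈ Icc 1 H, p t ≤ t * x t - ∫ z in (1:ℝ)..t, x z := fun t ht => by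
    linarith [hmyerson 1 t le_rfl ht.1 ht.2]
  have hρ_mid : MonotoneOn (fun t => ρ (uhat / t)) (uIcc 1 uhat) :=
    uIcc_of_le hu1 ▸ hρanti.monotoneOn_comp_div_left one_pos hu0.le fun s hs =>
      ⟨(one_le_div (one_pos.trans_le hs.1)).2 hs.2, (div_le_self hu0.le hs.1).trans huH⟩
  have hρ_high : AntitoneOn (fun t => ρ (t / uhat)) (uIcc uhat H) :=
    uIcc_of_le huH ▸ hρanti.antitoneOn_comp_div_const hu0.le fun s hs =>
      ⟨(one_le_div hu0).2 hs.1, (div_le_self (hu0.le.trans hs.1) hu1).trans hs.2⟩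
  have hlow : ∫ z in (1:ℝ)..uhat, ρ z / z ≤ (∫ z in (1:ℝ)..uhat, x z) / uhat := by
    have := (hmono.mono (Icc_subset_Icc_right huH)).integral_div_le_primitive_div_sub le_rfl
      one_pos hu1
      (hρ_mid.intervalIntegrable.div_id (notMem_uIcc_of_lt one_pos hu0))
      fun t ht => (hrob₁ t ht).trans (hpay t ⟨ht.1, ht.2.trans huH⟩)
    rwa [integral_comp_div_left_div ρ one_pos hu0 hu0, div_self hu0.ne', div_one,
      integral_same, zero_div, sub_zero] at this
  have hhigh : ∫ z in (1:ℝ)..(H / uhat), ρ z / z ≤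
      (∫ z in (1:ℝ)..H, x z) / H - (∫ z in (1:ℝ)..uhat, x z) / uhat := by
    have := hmono.integral_div_le_primitive_div_sub hu1 hu0 huH
      (hρ_high.intervalIntegrable.div_id (notMem_uIcc_of_lt hu0 (hu0.trans_le huH)))
      fun t ht => (hrob₂ t ht).trans (hpay t ⟨hu1.trans ht.1, ht.2⟩)
    rwa [integral_comp_div_div ρ uhat H hu0.ne', div_self hu0.ne'] at this
  have htop : ρ (H / uhat) ≤ 1 - (∫ z in (1:ℝ)..H, x z) / H := by
    have hH0 : 0 < H := one_pos.trans hH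
    have := (hrob₂ H ⟨huH, le_rfl⟩).trans (hpay H ⟨hH.le, le_rfl⟩)
    calc ρ (H / uhat) ≤ (H * x H - ∫ z in (1:ℝ)..H, x z) / H := (le_div_iff₀ hH0).2 this
      _ = x H - (∫ z in (1:ℝ)..H, x z) / H := by field_simp
      _ ≤ 1 - (∫ z in (1:ℝ)..H, x z) / H := by gcongr; exact (hfeas H ⟨hH.le, le_rfl⟩).2
  linarith

/-- The "only if" part of Theorem 2 of the paper: any feasible DSIC single-bidder
auction on `[1, H]` whose revenue satisfies the error-dependent robustness
guarantee given by a non-increasing function `ρ : [1,H] → [0,1]` must satisfy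
`ρ(H/uhat) + ∫_1^uhat ρ(z)/z dz + ∫_1^{H/uhat} ρ(z)/z dz ≤ 1`. -/
theorem robustness_of_prediction_error_necessary (H : ℝ) (hH : 1 < H)
    (uhat : ℝ) (huhat : uhat ∈ Set.Icc 1 H)
    (ρ : ℝ → ℝ)
    (hρrange : ∀ η ∈ Set.Icc 1 H, ρ η ∈ Set.Icc (0 : ℝ) 1)
    (hρanti : AntitoneOn ρ (Set.Icc 1 H))
    (x p : ℝ → ℝ)
    -- feasibility
    (hfeas : ∀ t ∈ Set.Icc 1 H, 0 ≤ x t ∧ x t ≤ 1)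
    -- DSIC: nonnegative payments, monotone allocation, individual rationality,
    -- and Myerson's payment identity
    (hppos : ∀ t ∈ Set.Icc 1 H, 0 ≤ p t)
    (hmono : MonotoneOn x (Set.Icc 1 H))
    (hir : p 1 ≤ x 1)
    (hmyerson : ∀ s t : ℝ, 1 ≤ s → s ≤ t → t ≤ H →
      p t - p s = t * x t - s * x s - ∫ z in s..t, x z)
    -- error-dependent robustness guarantee
    (hrob₁ : ∀ t ∈ Set.Icc 1 uhat, ρ (uhat / t) * t ≤ p t)
    (hrob₂ : ∀ t ∈ Set.Icc uhat H, ρ (t / uhat) * t ≤ p t) :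
    ρ (H / uhat) + (∫ z in (1:ℝ)..uhat, ρ z / z)
      + (∫ z in (1:ℝ)..(H / uhat), ρ z / z) ≤ 1 :=
  robustness_of_prediction_error_necessary_general H hH uhat huhat ρ hρanti x p hfeas hmono hir
    hmyerson hrob₁ hrob₂
end

section
/- Let H > 1, let û ∈ [1,H], and let ρ : [1,H] → [0,1] be a differentiable function such that ρ(η) is non-increasing in η and η·ρ(η) is non-decreasing in η. If ρ(H/û) + ∫_1^û ρ(z)/z dz + ∫_1^{H/û} ρ(z)/z dz ≤ 1, then there exists a feasible DSIC single-bidder auction (x,p) on [1,H] such that p(t) ≥ ρ(û/t)·t for all t ∈ [1,û] and p(t) ≥ ρ(t/û)·t for all t ∈ [û,H]. -/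
/-!
With `Λ(s) = ∫₁ˢ ρ(w)/w dw`, take the allocation `x(t) = ρ(û/t) + Λ(û) - Λ(û/t)` for
`t ≤ û` and `x(t) = ρ(t/û) + Λ(û) + Λ(t/û)` for `t ≥ û`, with Myerson's payment
`p(t) = t x(t) - ∫₁ᵗ x`. Since `t (Λ(û) - Λ(û/t))` and `t (Λ(û) + Λ(t/û))` are primitives of `x`
on the two ranges, `p(t)` equals `ρ(û/t) t`, resp. `ρ(t/û) t`.
Below `û`, `x` is monotone because `ρ` is antitone and `Λ` monotone; above `û`, because `ρ + Λ`
is monotone: `Λ(τ) - Λ(σ) ≥ ∫_σ^τ σρ(σ)/w² dw ≥ ρ(σ) - ρ(τ)` as `wρ(w)` is nondecreasing.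
The largest allocation `x(H)` is the left side of the hypothesis, hence at most `1`.
Monotonicity of `ηρ(η)` together with `ρ ≤ 1` also makes `ρ` `1`-Lipschitz, which supplies the
continuity the fundamental theorem of calculus needs.
-/
open MeasureTheory intervalIntegral Set

theorem monotoneOn_of_hasDerivAt_nonneg_Ioo {f f' : ℝ → ℝ} {a b : ℝ}
    (hf : ContinuousOn f (Icc a b)) (hf' : ∀ x ∈ Ioo a b, HasDerivAt f (f' x) x)
    (hf'₀ : ∀ x ∈ Ioo a b, 0 ≤ f' x) : MonotoneOn f (Icc a b) :=
  monotoneOn_of_hasDerivWithinAt_nonneg (convex_Icc a b) hf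
    (fun x hx => (hf' x (by rwa [interior_Icc] at hx)).hasDerivWithinAt)
    (fun x hx => hf'₀ x (by rwa [interior_Icc] at hx))

theorem lipschitzOnWith_one_of_antitoneOn_of_monotoneOn_mul {s : Set ℝ} {ρ : ℝ → ℝ}
    (hs : s ⊆ Ici 1) (hρ : ∀ η ∈ s, ρ η ≤ 1) (hanti : AntitoneOn ρ s)
    (hmono : MonotoneOn (fun η => η * ρ η) s) : LipschitzOnWith 1 ρ s := by
  refine LipschitzOnWith.of_le_add_mul 1 fun σ hσ τ hτ => ?_
  have hdist : 0 ≤ ((1 : NNReal) : ℝ) * dist σ τ := by positivity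
  rcases le_total τ σ with hτσ | hστ
  · linarith [hanti hτ hσ hτσ]
  · have hmul : σ * ρ σ ≤ τ * ρ τ := hmono hσ hτ hστ
    have h1 : (1 : ℝ) ≤ τ := hs hτ
    rw [Real.dist_eq, abs_sub_comm, abs_of_nonneg (sub_nonneg.2 hστ), NNReal.coe_one, one_mul]
    nlinarith [hρ σ hσ]

noncomputable def logPrimitive (ρ : ℝ → ℝ) (s : ℝ) : ℝ := ∫ w in (1 : ℝ)..s, ρ w / w

section logPrimitive

variable {H : ℝ} {ρ : ℝ → ℝ}

theorem logPrimitive_one (ρ : ℝ → ℝ) : logPrimitive ρ 1 = 0 := integral_same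

theorem continuousOn_div_id (hρ : ContinuousOn ρ (Icc 1 H)) :
    ContinuousOn (fun w => ρ w / w) (Icc 1 H) :=
  hρ.div continuousOn_id fun _ hw => (zero_lt_one.trans_le hw.1).ne'

theorem hasDerivAt_logPrimitive (hρ : ContinuousOn ρ (Icc 1 H)) {s : ℝ} (hs : s ∈ Ioo 1 H) :
    HasDerivAt (logPrimitive ρ) (ρ s / s) s := by
  have hcont := continuousOn_div_id hρ
  refine integral_hasDerivAt_right ((hcont.mono ?_).intervalIntegrable)
    ((hcont.mono Ioo_subset_Icc_self).stronglyMeasurableAtFilter isOpen_Ioo s hs)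
    (hcont.continuousAt (Icc_mem_nhds hs.1 hs.2))
  rw [uIcc_of_le hs.1.le]
  exact Icc_subset_Icc_right hs.2.le

theorem continuousOn_logPrimitive (hρ : ContinuousOn ρ (Icc 1 H)) (hH : 1 ≤ H) :
    ContinuousOn (logPrimitive ρ) (Icc 1 H) := by
  have := continuousOn_primitive_interval' (μ := volume)
    ((continuousOn_div_id hρ).intervalIntegrable_of_Icc hH) left_mem_uIcc
  rwa [uIcc_of_le hH] at this

theorem monotoneOn_logPrimitive (hρ : ContinuousOn ρ (Icc 1 H)) (hH : 1 ≤ H)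
    (hρ0 : ∀ η ∈ Icc 1 H, 0 ≤ ρ η) : MonotoneOn (logPrimitive ρ) (Icc 1 H) :=
  monotoneOn_of_hasDerivAt_nonneg_Ioo (continuousOn_logPrimitive hρ hH)
    (fun _ hs => hasDerivAt_logPrimitive hρ hs)
    fun s hs => div_nonneg (hρ0 s (Ioo_subset_Icc_self hs)) (zero_lt_one.trans hs.1).le

theorem monotoneOn_add_logPrimitive (hρ : ContinuousOn ρ (Icc 1 H)) (hH : 1 ≤ H)
    (hmono : MonotoneOn (fun η => η * ρ η) (Icc 1 H)) :
    MonotoneOn (fun η => ρ η + logPrimitive ρ η) (Icc 1 H) := by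
  intro σ hσ τ hτ hστ
  have hσ0 : 0 < σ := zero_lt_one.trans_le hσ.1
  have hsub : Icc σ τ ⊆ Icc 1 H := Icc_subset_Icc hσ.1 hτ.2
  -- its derivative `ρ(w)/w - σρ(σ)/w²` is nonnegative because `wρ(w) ≥ σρ(σ)` for `w ≥ σ`
  have hφ : MonotoneOn (fun w => logPrimitive ρ w + σ * ρ σ / w) (Icc σ τ) := by
    refine monotoneOn_of_hasDerivAt_nonneg_Ioo
      (f' := fun w => ρ w / w + σ * ρ σ * -(w ^ 2)⁻¹)
      (((continuousOn_logPrimitive hρ hH).mono hsub).add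
        (continuousOn_const.div continuousOn_id fun w hw => (hσ0.trans_le hw.1).ne'))
      (fun w hw => ?_) fun w hw => ?_
    · have hw0 : w ≠ 0 := (hσ0.trans hw.1).ne'
      exact (hasDerivAt_logPrimitive hρ (Ioo_subset_Ioo hσ.1 hτ.2 hw)).add
        ((hasDerivAt_inv hw0).const_mul (σ * ρ σ))
    · have hw0 : 0 < w := hσ0.trans hw.1
      have := hmono hσ (hsub (Ioo_subset_Icc_self hw)) hw.1.le
      rw [mul_neg, ← sub_eq_add_neg, sub_nonneg]
      calc σ * ρ σ * (w ^ 2)⁻¹ ≤ w * ρ w * (w ^ 2)⁻¹ := by gcongr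
        _ = ρ w / w := by field_simp
  have hτρ : σ * ρ σ / τ ≤ ρ τ := by
    rw [div_le_iff₀ (hσ0.trans_le hστ)]
    linarith [hmono hσ hτ hστ]
  have hφστ : logPrimitive ρ σ + σ * ρ σ / σ ≤ logPrimitive ρ τ + σ * ρ σ / τ :=
    hφ ⟨le_rfl, hστ⟩ ⟨hστ, le_rfl⟩ hστ
  rw [mul_div_cancel_left₀ _ hσ0.ne'] at hφστ
  show ρ σ + logPrimitive ρ σ ≤ ρ τ + logPrimitive ρ τ
  linarith

theorem hasDerivAt_mul_sub_logPrimitive_div (hρ : ContinuousOn ρ (Icc 1 H)) {a z : ℝ}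
    (hz : z ≠ 0) (haz : a / z ∈ Ioo 1 H) :
    HasDerivAt (fun z => z * (logPrimitive ρ a - logPrimitive ρ (a / z)))
      (ρ (a / z) + (logPrimitive ρ a - logPrimitive ρ (a / z))) z := by
  have ha : a ≠ 0 := (div_ne_zero_iff.1 (zero_lt_one.trans haz.1).ne').1
  have hinner : HasDerivAt (fun z => a / z) ((0 * z - a * 1) / z ^ 2) z :=
    (hasDerivAt_const z a).div (hasDerivAt_id z) hz
  have h : HasDerivAt (fun z => z * (logPrimitive ρ a - logPrimitive ρ (a / z)))
      (1 * (logPrimitive ρ a - logPrimitive ρ (a / z))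
        + z * (0 - ρ (a / z) / (a / z) * ((0 * z - a * 1) / z ^ 2))) z :=
    (hasDerivAt_id z).mul ((hasDerivAt_const z _).sub
      ((hasDerivAt_logPrimitive hρ haz).comp z hinner))
  convert h using 1
  field_simp
  ring

theorem hasDerivAt_mul_add_logPrimitive_div (hρ : ContinuousOn ρ (Icc 1 H)) {a z : ℝ}
    (ha : a ≠ 0) (hza : z / a ∈ Ioo 1 H) :
    HasDerivAt (fun z => z * (logPrimitive ρ a + logPrimitive ρ (z / a)))
      (ρ (z / a) + logPrimitive ρ a + logPrimitive ρ (z / a)) z := by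
  have hz : z ≠ 0 := (div_ne_zero_iff.1 (zero_lt_one.trans hza.1).ne').1
  have hinner : HasDerivAt (fun z => z / a) (1 / a) z := (hasDerivAt_id z).div_const a
  have h : HasDerivAt (fun z => z * (logPrimitive ρ a + logPrimitive ρ (z / a)))
      (1 * (logPrimitive ρ a + logPrimitive ρ (z / a))
        + z * (0 + ρ (z / a) / (z / a) * (1 / a))) z :=
    (hasDerivAt_id z).mul ((hasDerivAt_const z _).add
      ((hasDerivAt_logPrimitive hρ hza).comp (h := fun z => z / a) z hinner))
  convert h using 1
  field_simp
  ring

end logPrimitive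

theorem div_mem_Icc_one_self {a z : ℝ} (hz : z ∈ Icc 1 a) : a / z ∈ Icc 1 a := by
  have hz0 : 0 < z := zero_lt_one.trans_le hz.1
  exact ⟨(one_le_div hz0).2 hz.2, div_le_self (hz0.le.trans hz.2) hz.1⟩

theorem div_mem_Ioo_one_self {a z : ℝ} (hz : z ∈ Ioo 1 a) : a / z ∈ Ioo 1 a := by
  have hz0 : 0 < z := zero_lt_one.trans hz.1
  exact ⟨(one_lt_div hz0).2 hz.2, div_lt_self (hz0.trans hz.2) hz.1⟩

theorem div_mem_Icc_one_of_mem_Icc {a b z : ℝ} (ha : 1 ≤ a) (hz : z ∈ Icc a b) :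
    z / a ∈ Icc 1 b := by
  have ha0 : 0 < a := zero_lt_one.trans_le ha
  exact ⟨(one_le_div ha0).2 hz.1, (div_le_self (ha0.le.trans hz.1) ha).trans hz.2⟩

theorem div_mem_Ioo_one_of_mem_Ioo {a b z : ℝ} (ha : 1 ≤ a) (hz : z ∈ Ioo a b) :
    z / a ∈ Ioo 1 b := by
  have ha0 : 0 < a := zero_lt_one.trans_le ha
  exact ⟨(one_lt_div ha0).2 hz.1, (div_le_self (ha0.le.trans hz.1.le) ha).trans_lt hz.2⟩

noncomputable def myersonPayment (x : ℝ → ℝ) (t : ℝ) : ℝ := t * x t - ∫ z in (1 : ℝ)..t, x z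

theorem myersonPayment_one (x : ℝ → ℝ) : myersonPayment x 1 = x 1 := by
  simp [myersonPayment]

theorem myersonPayment_sub_myersonPayment {x : ℝ → ℝ} {s t : ℝ}
    (hs : IntervalIntegrable x volume 1 s) (hst : IntervalIntegrable x volume s t) :
    myersonPayment x t - myersonPayment x s = t * x t - s * x s - ∫ z in s..t, x z := by
  rw [myersonPayment, myersonPayment, ← integral_add_adjacent_intervals hs hst]
  ring

noncomputable def allocation (ρ : ℝ → ℝ) (uhat t : ℝ) : ℝ :=
  if t ≤ uhat then ρ (uhat / t) + (logPrimitive ρ uhat - logPrimitive ρ (uhat / t))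
  else ρ (t / uhat) + logPrimitive ρ uhat + logPrimitive ρ (t / uhat)

section allocation

variable {H uhat : ℝ} {ρ : ℝ → ℝ}

theorem allocation_of_le {t : ℝ} (ht : t ≤ uhat) :
    allocation ρ uhat t = ρ (uhat / t) + (logPrimitive ρ uhat - logPrimitive ρ (uhat / t)) :=
  if_pos ht

theorem allocation_of_ge (hu : uhat ≠ 0) {t : ℝ} (ht : uhat ≤ t) :
    allocation ρ uhat t = ρ (t / uhat) + logPrimitive ρ uhat + logPrimitive ρ (t / uhat) := by
  rcases ht.eq_or_lt with rfl | hlt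
  · rw [allocation_of_le le_rfl, div_self hu, logPrimitive_one]
    ring
  · exact if_neg hlt.not_ge

theorem allocation_one (hu : 1 ≤ uhat) : allocation ρ uhat 1 = ρ uhat := by
  rw [allocation_of_le hu, div_one, sub_self, add_zero]

theorem monotoneOn_allocation (hH : 1 ≤ H) (hu : uhat ∈ Icc 1 H) (hρ : ContinuousOn ρ (Icc 1 H))
    (hρ0 : ∀ η ∈ Icc 1 H, 0 ≤ ρ η) (hanti : AntitoneOn ρ (Icc 1 H))
    (hmono : MonotoneOn (fun η => η * ρ η) (Icc 1 H)) :
    MonotoneOn (allocation ρ uhat) (Icc 1 H) := by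
  have hu0 : 0 < uhat := zero_lt_one.trans_le hu.1
  have hlow : MonotoneOn (allocation ρ uhat) (Icc 1 uhat) := by
    intro s hs t ht hst
    have hs' := div_mem_Icc_one_self hs
    have ht' := div_mem_Icc_one_self ht
    have hsub : Icc 1 uhat ⊆ Icc 1 H := Icc_subset_Icc_right hu.2
    have hdiv : uhat / t ≤ uhat / s := div_le_div_of_nonneg_left hu0.le (zero_lt_one.trans_le hs.1) hst
    rw [allocation_of_le hs.2, allocation_of_le ht.2]
    linarith [hanti (hsub ht') (hsub hs') hdiv,
      monotoneOn_logPrimitive hρ hH hρ0 (hsub ht') (hsub hs') hdiv]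
  have hhigh : MonotoneOn (allocation ρ uhat) (Icc uhat H) := by
    intro s hs t ht hst
    rw [allocation_of_ge hu0.ne' hs.1, allocation_of_ge hu0.ne' ht.1]
    linarith [monotoneOn_add_logPrimitive hρ hH hmono (div_mem_Icc_one_of_mem_Icc hu.1 hs)
      (div_mem_Icc_one_of_mem_Icc hu.1 ht) (div_le_div_of_nonneg_right hst hu0.le)]
  have := hlow.union_right hhigh (isGreatest_Icc hu.1) (isLeast_Icc hu.2)
  rwa [Icc_union_Icc_eq_Icc hu.1 hu.2] at this

end allocation

section payment

variable {H uhat : ℝ} {ρ : ℝ → ℝ}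

theorem integral_allocation_of_le (hρ : ContinuousOn ρ (Icc 1 H)) (hu : uhat ≤ H) {t : ℝ}
    (ht : t ∈ Icc 1 uhat) (hint : IntervalIntegrable (allocation ρ uhat) volume 1 t) :
    ∫ z in (1 : ℝ)..t, allocation ρ uhat z
      = t * (logPrimitive ρ uhat - logPrimitive ρ (uhat / t)) := by
  have hH : 1 ≤ H := ht.1.trans (ht.2.trans hu)
  have hcont : ContinuousOn (fun z => z * (logPrimitive ρ uhat - logPrimitive ρ (uhat / z)))
      (Icc 1 t) :=
    continuousOn_id.mul (continuousOn_const.sub ((continuousOn_logPrimitive hρ hH).comp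
      (continuousOn_const.div continuousOn_id fun z hz => (zero_lt_one.trans_le hz.1).ne')
      fun z hz => Icc_subset_Icc_right hu (div_mem_Icc_one_self ⟨hz.1, hz.2.trans ht.2⟩)))
  rw [integral_eq_sub_of_hasDeriv_right_of_le ht.1 hcont (fun z hz => ?_) hint]
  · simp
  · rw [allocation_of_le (hz.2.le.trans ht.2)]
    exact (hasDerivAt_mul_sub_logPrimitive_div hρ (zero_lt_one.trans hz.1).ne'
      (Ioo_subset_Ioo_right hu (div_mem_Ioo_one_self ⟨hz.1, hz.2.trans_le ht.2⟩))).hasDerivWithinAt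

theorem integral_allocation_of_ge (hρ : ContinuousOn ρ (Icc 1 H)) (hu : 1 ≤ uhat) {t : ℝ}
    (ht : t ∈ Icc uhat H) (hint : IntervalIntegrable (allocation ρ uhat) volume uhat t) :
    ∫ z in uhat..t, allocation ρ uhat z
      = t * (logPrimitive ρ uhat + logPrimitive ρ (t / uhat)) - uhat * logPrimitive ρ uhat := by
  have hH : 1 ≤ H := hu.trans (ht.1.trans ht.2)
  have hu0 : 0 < uhat := zero_lt_one.trans_le hu
  have hcont : ContinuousOn (fun z => z * (logPrimitive ρ uhat + logPrimitive ρ (z / uhat)))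
      (Icc uhat t) :=
    continuousOn_id.mul (continuousOn_const.add ((continuousOn_logPrimitive hρ hH).comp
      (continuousOn_id.div_const uhat)
      fun z hz => div_mem_Icc_one_of_mem_Icc hu ⟨hz.1, hz.2.trans ht.2⟩))
  rw [integral_eq_sub_of_hasDeriv_right_of_le ht.1 hcont (fun z hz => ?_) hint]
  · simp [div_self hu0.ne', logPrimitive_one]
  · rw [allocation_of_ge hu0.ne' hz.1.le]
    exact (hasDerivAt_mul_add_logPrimitive_div hρ hu0.ne'
      (div_mem_Ioo_one_of_mem_Ioo hu ⟨hz.1, hz.2.trans_le ht.2⟩)).hasDerivWithinAt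

theorem myersonPayment_allocation_of_le (hρ : ContinuousOn ρ (Icc 1 H)) (hu : uhat ≤ H)
    {t : ℝ} (ht : t ∈ Icc 1 uhat) (hint : IntervalIntegrable (allocation ρ uhat) volume 1 t) :
    myersonPayment (allocation ρ uhat) t = ρ (uhat / t) * t := by
  rw [myersonPayment, integral_allocation_of_le hρ hu ht hint, allocation_of_le ht.2]
  ring

theorem myersonPayment_allocation_of_ge (hρ : ContinuousOn ρ (Icc 1 H)) (hu : 1 ≤ uhat)
    {t : ℝ} (ht : t ∈ Icc uhat H) (hint₁ : IntervalIntegrable (allocation ρ uhat) volume 1 uhat)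
    (hint₂ : IntervalIntegrable (allocation ρ uhat) volume uhat t) :
    myersonPayment (allocation ρ uhat) t = ρ (t / uhat) * t := by
  have hu0 : 0 < uhat := zero_lt_one.trans_le hu
  rw [myersonPayment, ← integral_add_adjacent_intervals hint₁ hint₂,
    integral_allocation_of_le hρ (ht.1.trans ht.2) ⟨hu, le_rfl⟩ hint₁,
    integral_allocation_of_ge hρ hu ht hint₂, allocation_of_ge hu0.ne' ht.1, div_self hu0.ne',
    logPrimitive_one]
  ring

end payment

theorem robustness_of_prediction_error_sufficient_general (H : ℝ) (hH : 1 < H)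
    (uhat : ℝ) (huhat : uhat ∈ Set.Icc 1 H)
    (ρ : ℝ → ℝ)
    (hρrange : ∀ η ∈ Set.Icc 1 H, ρ η ∈ Set.Icc (0 : ℝ) 1)
    (hρanti : AntitoneOn ρ (Set.Icc 1 H))
    (hρmono : MonotoneOn (fun η => η * ρ η) (Set.Icc 1 H))
    (hcond : ρ (H / uhat) + (∫ z in (1:ℝ)..uhat, ρ z / z)
      + (∫ z in (1:ℝ)..(H / uhat), ρ z / z) ≤ 1) :
    ∃ x p : ℝ → ℝ,
      -- feasibility
      (∀ t ∈ Set.Icc 1 H, 0 ≤ x t ∧ x t ≤ 1) ∧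
      -- DSIC: nonnegative payments, monotone allocation, individual rationality,
      -- and Myerson's payment identity
      (∀ t ∈ Set.Icc 1 H, 0 ≤ p t) ∧
      MonotoneOn x (Set.Icc 1 H) ∧
      p 1 ≤ x 1 ∧
      (∀ s t : ℝ, 1 ≤ s → s ≤ t → t ≤ H →
        p t - p s = t * x t - s * x s - ∫ z in s..t, x z) ∧
      -- error-dependent robustness guarantee
      (∀ t ∈ Set.Icc 1 uhat, ρ (uhat / t) * t ≤ p t) ∧
      (∀ t ∈ Set.Icc uhat H, ρ (t / uhat) * t ≤ p t) := by
  have hρ0 : ∀ η ∈ Icc 1 H, 0 ≤ ρ η := fun η hη => (hρrange η hη).1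
  have hρ : ContinuousOn ρ (Icc 1 H) :=
    (lipschitzOnWith_one_of_antitoneOn_of_monotoneOn_mul (fun _ hη => hη.1)
      (fun η hη => (hρrange η hη).2) hρanti hρmono).continuousOn
  set x := allocation ρ uhat
  have hx : MonotoneOn x (Icc 1 H) := monotoneOn_allocation hH.le huhat hρ hρ0 hρanti hρmono
  have hint : ∀ s ∈ Icc 1 H, ∀ t ∈ Icc 1 H, IntervalIntegrable x volume s t :=
    fun s hs t ht => (hx.mono (uIcc_subset_Icc hs ht)).intervalIntegrable
  have h1 : (1 : ℝ) ∈ Icc 1 H := left_mem_Icc.2 hH.le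
  have hp_low : ∀ t ∈ Icc 1 uhat, myersonPayment x t = ρ (uhat / t) * t := fun t ht =>
    myersonPayment_allocation_of_le hρ huhat.2 ht (hint 1 h1 t ⟨ht.1, ht.2.trans huhat.2⟩)
  have hp_high : ∀ t ∈ Icc uhat H, myersonPayment x t = ρ (t / uhat) * t := fun t ht =>
    myersonPayment_allocation_of_ge hρ huhat.1 ht (hint 1 h1 uhat huhat)
      (hint uhat huhat t ⟨huhat.1.trans ht.1, ht.2⟩)
  refine ⟨x, myersonPayment x, fun t ht => ⟨?_, ?_⟩, fun t ht => ?_, hx,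
    (myersonPayment_one x).le, fun s t hs hst htH => ?_, fun t ht => (hp_low t ht).ge,
    fun t ht => (hp_high t ht).ge⟩
  · calc 0 ≤ ρ uhat := hρ0 uhat huhat
      _ = x 1 := (allocation_one huhat.1).symm
      _ ≤ x t := hx h1 ht ht.1
  · calc x t ≤ x H := hx ht (right_mem_Icc.2 hH.le) ht.2
      _ = ρ (H / uhat) + logPrimitive ρ uhat + logPrimitive ρ (H / uhat) :=
        allocation_of_ge (zero_lt_one.trans_le huhat.1).ne' huhat.2
      _ ≤ 1 := hcond
  · rcases le_total t uhat with htu | hut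
    · rw [hp_low t ⟨ht.1, htu⟩]
      exact mul_nonneg (hρ0 _ (Icc_subset_Icc_right huhat.2 (div_mem_Icc_one_self ⟨ht.1, htu⟩)))
        (zero_le_one.trans ht.1)
    · rw [hp_high t ⟨hut, ht.2⟩]
      exact mul_nonneg (hρ0 _ (div_mem_Icc_one_of_mem_Icc huhat.1 ⟨hut, ht.2⟩))
        (zero_le_one.trans ht.1)
  · exact myersonPayment_sub_myersonPayment (hint 1 h1 s ⟨hs, hst.trans htH⟩)
      (hint s ⟨hs, hst.trans htH⟩ t ⟨hs.trans hst, htH⟩)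

/-- The "if" part of Theorem 2 of the paper: if the robustness function `ρ`
satisfies `ρ(H/uhat) + ∫_1^uhat ρ(z)/z dz + ∫_1^{H/uhat} ρ(z)/z dz ≤ 1`, then
there exists a feasible DSIC single-bidder auction on `[1, H]` satisfying the
corresponding error-dependent robustness guarantee. -/
theorem robustness_of_prediction_error_sufficient (H : ℝ) (hH : 1 < H)
    (uhat : ℝ) (huhat : uhat ∈ Set.Icc 1 H)
    (ρ : ℝ → ℝ)
    (hρrange : ∀ η ∈ Set.Icc 1 H, ρ η ∈ Set.Icc (0 : ℝ) 1)
    (hρdiff : DifferentiableOn ℝ ρ (Set.Icc 1 H))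
    (hρanti : AntitoneOn ρ (Set.Icc 1 H))
    (hρmono : MonotoneOn (fun η => η * ρ η) (Set.Icc 1 H))
    (hcond : ρ (H / uhat) + (∫ z in (1:ℝ)..uhat, ρ z / z)
      + (∫ z in (1:ℝ)..(H / uhat), ρ z / z) ≤ 1) :
    ∃ x p : ℝ → ℝ,
      -- feasibility
      (∀ t ∈ Set.Icc 1 H, 0 ≤ x t ∧ x t ≤ 1) ∧
      -- DSIC: nonnegative payments, monotone allocation, individual rationality,
      -- and Myerson's payment identity
      (∀ t ∈ Set.Icc 1 H, 0 ≤ p t) ∧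
      MonotoneOn x (Set.Icc 1 H) ∧
      p 1 ≤ x 1 ∧
      (∀ s t : ℝ, 1 ≤ s → s ≤ t → t ≤ H →
        p t - p s = t * x t - s * x s - ∫ z in s..t, x z) ∧
      -- error-dependent robustness guarantee
      (∀ t ∈ Set.Icc 1 uhat, ρ (uhat / t) * t ≤ p t) ∧
      (∀ t ∈ Set.Icc uhat H, ρ (t / uhat) * t ≤ p t) :=
  robustness_of_prediction_error_sufficient_general H hH uhat huhat ρ hρrange hρanti hρmono hcond
end
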